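/- Suppose a multi-player game has an optimal equilibrium σ and the total payoff at σ is maximal, i.e., V^M(σ) = sup_{s} V^M(s) (which holds in particular if the game is zero-sum). Then for every coalition A ⊆ M, the coalition value exists and is additive: sup_{s^A} inf_{s^{-A}} V^A(s^A, s^{-A}) = inf_{s^{-A}} sup_{s^A} V^A(s^A, s^{-A}) = V^A(σ) = Σ_{i∈A} V^i(σ). -/

import Mathlib

/-!
Fix a coalition `A` and view `V^A(τ^A, ρ^{-A})` as a two-person zero-sum game between `A` and
its complement. Since each `σ^k` guarantees player `k` at least `V^k(σ)` whatever the others do,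
`A` secures `V^A(σ)` by playing `σ^A`. Conversely, against `σ^{-A}` the complement secures
`V^{-A}(σ)`, and since `V^M` is maximal at `σ`, the coalition can get at most
`V^M(σ) - V^{-A}(σ) = V^A(σ)`. So `(σ^A, σ^{-A})` is a saddle point with value `V^A(σ)`.
-/

/-- The profile in which the coalition `A` plays `τ` while all remaining players
play according to `ρ`, i.e. `(τ^A, ρ^{-A})`. -/
def comb {ι : Type*} [DecidableEq ι] {S : ι → Type*} (A : Finset ι)
    (τ ρ : ∀ i, S i) : ∀ i, S i :=
  fun i => if i ∈ A then τ i else ρ i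

open Finset Function Set

section SaddlePoint

variable {α β γ : Type*} [ConditionallyCompleteLattice γ] {f : α → β → γ} {x₀ : α} {y₀ : β}
  {v : γ}

theorem ciSup_ciInf_eq_of_saddle (hbdd : ∀ x, BddBelow (range (f x)))
    (hx : ∀ x, f x y₀ ≤ v) (hy : ∀ y, v ≤ f x₀ y) : ⨆ x, ⨅ y, f x y = v := by
  have : Nonempty α := ⟨x₀⟩
  have : Nonempty β := ⟨y₀⟩
  have hinf_le : ∀ x, ⨅ y, f x y ≤ v := fun x => ciInf_le_of_le (hbdd x) y₀ (hx x)
  exact le_antisymm (ciSup_le hinf_le)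
    (le_ciSup_of_le ⟨v, forall_mem_range.2 hinf_le⟩ x₀ (le_ciInf hy))

theorem ciInf_ciSup_eq_of_saddle (hbdd : ∀ y, BddAbove (range fun x => f x y))
    (hx : ∀ x, f x y₀ ≤ v) (hy : ∀ y, v ≤ f x₀ y) : ⨅ y, ⨆ x, f x y = v := by
  have : Nonempty α := ⟨x₀⟩
  have : Nonempty β := ⟨y₀⟩
  have le_sup : ∀ y, v ≤ ⨆ x, f x y := fun y => le_ciSup_of_le (hbdd y) x₀ (hy y)
  exact le_antisymm (ciInf_le_of_le ⟨v, forall_mem_range.2 le_sup⟩ y₀ (ciSup_le hx))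
    (le_ciInf le_sup)

end SaddlePoint

section Coalition

variable {ι : Type*} {S : ι → Type*} {V : ι → (∀ i, S i) → ℝ} {σ : ∀ i, S i}

theorem comb_apply_of_mem [DecidableEq ι] {A : Finset ι} {τ ρ : ∀ i, S i} {i : ι} (h : i ∈ A) :
    comb A τ ρ i = τ i :=
  if_pos h

theorem comb_apply_of_notMem [DecidableEq ι] {A : Finset ι} {τ ρ : ∀ i, S i} {i : ι}
    (h : i ∉ A) : comb A τ ρ i = ρ i :=
  if_neg h

theorem abs_sum_le_card_mul {C : ℝ} (hC : ∀ k s, |V k s| ≤ C) (A : Finset ι) (s : ∀ i, S i) :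
    |∑ i ∈ A, V i s| ≤ #A * C :=
  calc |∑ i ∈ A, V i s| ≤ ∑ i ∈ A, |V i s| := abs_sum_le_sum_abs _ _
    _ ≤ #A * C := by simpa using sum_le_card_nsmul A _ C fun i _ => hC i s

variable [DecidableEq ι]

theorem sum_le_sum_of_agree (hσ : ∀ k (ρ : ∀ i, S i), V k σ ≤ V k (update ρ k (σ k)))
    {B : Finset ι} {s : ∀ i, S i} (hs : ∀ i ∈ B, s i = σ i) :
    ∑ i ∈ B, V i σ ≤ ∑ i ∈ B, V i s :=
  sum_le_sum fun i hi => by simpa only [← hs i hi, update_eq_self] using hσ i s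

theorem sum_le_sum_of_agree_compl [Fintype ι]
    (hσ : ∀ k (ρ : ∀ i, S i), V k σ ≤ V k (update ρ k (σ k)))
    (hmax : ∀ s, ∑ i, V i s ≤ ∑ i, V i σ)
    {A : Finset ι} {s : ∀ i, S i} (hs : ∀ i ∈ Aᶜ, s i = σ i) :
    ∑ i ∈ A, V i s ≤ ∑ i ∈ A, V i σ := by
  have hcompl := sum_le_sum_of_agree hσ hs
  linarith [hmax s, sum_add_sum_compl A fun i => V i s, sum_add_sum_compl A fun i => V i σ]

end Coalition

theorem coalition_values_additive_general {ι : Type*} [Fintype ι] [DecidableEq ι]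
    {S : ι → Type*}
    (V : ι → (∀ i, S i) → ℝ) (C : ℝ) (hC : ∀ k s, |V k s| ≤ C)
    (σ : ∀ i, S i)
    (hOpt : ∀ k, (∀ ρ : ∀ i, S i, V k (Function.update ρ k (σ k)) ≥ V k σ) ∧
      (∀ a : S k, V k σ ≥ V k (Function.update σ k a)))
    (hmax : ∀ s : ∀ i, S i, ∑ i, V i s ≤ ∑ i, V i σ) :
    ∀ A : Finset ι,
      (⨆ τ : ∀ i, S i, ⨅ ρ : ∀ i, S i, ∑ i ∈ A, V i (comb A τ ρ)) =
          ∑ i ∈ A, V i σ ∧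
      (⨅ ρ : ∀ i, S i, ⨆ τ : ∀ i, S i, ∑ i ∈ A, V i (comb A τ ρ)) =
          ∑ i ∈ A, V i σ := by
  intro A
  have hσ := fun k => (hOpt k).1
  have hbound := abs_sum_le_card_mul hC A
  have hx : ∀ τ, ∑ i ∈ A, V i (comb A τ σ) ≤ ∑ i ∈ A, V i σ := fun τ =>
    sum_le_sum_of_agree_compl hσ hmax fun _ hi => comb_apply_of_notMem (mem_compl.1 hi)
  have hy : ∀ ρ, ∑ i ∈ A, V i σ ≤ ∑ i ∈ A, V i (comb A σ ρ) := fun ρ =>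
    sum_le_sum_of_agree hσ fun _ hi => comb_apply_of_mem hi
  exact ⟨ciSup_ciInf_eq_of_saddle
      (fun τ => ⟨_, forall_mem_range.2 fun ρ => (abs_le.1 (hbound (comb A τ ρ))).1⟩) hx hy,
    ciInf_ciSup_eq_of_saddle
      (fun ρ => ⟨_, forall_mem_range.2 fun τ => (abs_le.1 (hbound (comb A τ ρ))).2⟩) hx hy⟩

/-- Suppose a multi-player game (with bounded payoffs) has an optimal equilibrium
`σ` and the total payoff at `σ` is maximal, i.e. `V^M(σ) = sup_s V^M(s)`.
Then for every coalition `A ⊆ M` the coalition value exists and is additive: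
`sup_{s^A} inf_{s^{-A}} V^A = inf_{s^{-A}} sup_{s^A} V^A = V^A(σ) = Σ_{i∈A} V^i(σ)`. -/
theorem coalition_values_additive {ι : Type*} [Fintype ι] [DecidableEq ι]
    {S : ι → Type*} [∀ i, Nonempty (S i)]
    (V : ι → (∀ i, S i) → ℝ) (C : ℝ) (hC : ∀ k s, |V k s| ≤ C)
    (σ : ∀ i, S i)
    (hOpt : ∀ k, (∀ ρ : ∀ i, S i, V k (Function.update ρ k (σ k)) ≥ V k σ) ∧
      (∀ a : S k, V k σ ≥ V k (Function.update σ k a)))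
    (hmax : ∀ s : ∀ i, S i, ∑ i, V i s ≤ ∑ i, V i σ) :
    ∀ A : Finset ι,
      (⨆ τ : ∀ i, S i, ⨅ ρ : ∀ i, S i, ∑ i ∈ A, V i (comb A τ ρ)) =
          ∑ i ∈ A, V i σ ∧
      (⨅ ρ : ∀ i, S i, ⨆ τ : ∀ i, S i, ∑ i ∈ A, V i (comb A τ ρ)) =
          ∑ i ∈ A, V i σ :=
  coalition_values_additive_general V C hC σ hOpt hmax
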